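/- For all k, l ∈ ℤ∖{0, ±2}, λ_k^+ ≠ λ_l^- (in particular, for k ∉ {0,±2} the two eigenvalues λ_k^+ and λ_k^- are distinct, and the hyperbolic and parabolic branches of the spectrum do not intersect). Moreover λ_0^+ = λ_0^- = 0, λ_2^+ = λ_2^- = −2 + 2i and λ_{−2}^+ = λ_{−2}^- = −2 − 2i. -/
import Mathlib


/-- The hyperbolic eigenvalue branch `λ_k⁺ = (-(k² - 2ik) + √(k⁴ - 4k²))/2`, with the
principal complex square root. -/
noncomputable def lamP (k : ℤ) : ℂ :=
  (-((k:ℂ)^2 - 2*Complex.I*(k:ℂ)) + ((k:ℂ)^4 - 4*(k:ℂ)^2) ^ ((1:ℂ)/2)) / 2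

/-- The parabolic eigenvalue branch `λ_k⁻ = (-(k² - 2ik) - √(k⁴ - 4k²))/2`, with the
principal complex square root. -/
noncomputable def lamM (k : ℤ) : ℂ :=
  (-((k:ℂ)^2 - 2*Complex.I*(k:ℂ)) - ((k:ℂ)^4 - 4*(k:ℂ)^2) ^ ((1:ℂ)/2)) / 2

lemma cpow_half_nonneg {x : ℝ} (hx : 0 ≤ x) : (x : ℂ) ^ ((1:ℂ)/2) = (Real.sqrt x : ℂ) := by
  have h := Complex.ofReal_cpow hx (1/2)
  push_cast at h
  rw [← h, Real.sqrt_eq_rpow]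

lemma cpow_half_neg {x : ℝ} (hx : x ≤ 0) :
    (x : ℂ) ^ ((1:ℂ)/2) = (Real.sqrt (-x) : ℂ) * Complex.I := by
  rw [Complex.ofReal_cpow_of_nonpos hx]
  rw [show (-(x:ℂ)) = ((-x : ℝ) : ℂ) by push_cast; ring,
    cpow_half_nonneg (by linarith : (0:ℝ) ≤ -x)]
  congr 1
  rw [show (↑Real.pi * Complex.I * (1/2) : ℂ) = ((Real.pi/2 : ℝ) : ℂ) * Complex.I by
      push_cast; ring,
    Complex.exp_mul_I]
  rw [← Complex.ofReal_cos, ← Complex.ofReal_sin]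
  simp

lemma disc_cast (k : ℤ) :
    ((k:ℂ)^4 - 4*(k:ℂ)^2) = (((k:ℝ)^4 - 4*(k:ℝ)^2 : ℝ) : ℂ) := by
  push_cast; ring

lemma lamP_big {k : ℤ} (h : 0 ≤ (k:ℝ)^4 - 4*(k:ℝ)^2) :
    (lamP k).re = (-(k:ℝ)^2 + Real.sqrt ((k:ℝ)^4 - 4*(k:ℝ)^2))/2 ∧ (lamP k).im = (k:ℝ) := by
  have heq : lamP k = (((-(k:ℝ)^2 + Real.sqrt ((k:ℝ)^4 - 4*(k:ℝ)^2))/2 : ℝ) : ℂ)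
      + ((k:ℝ) : ℂ) * Complex.I := by
    unfold lamP
    rw [disc_cast, cpow_half_nonneg h]
    push_cast
    ring
  rw [heq]
  constructor <;> simp <;> norm_cast

lemma lamM_big {k : ℤ} (h : 0 ≤ (k:ℝ)^4 - 4*(k:ℝ)^2) :
    (lamM k).re = (-(k:ℝ)^2 - Real.sqrt ((k:ℝ)^4 - 4*(k:ℝ)^2))/2 ∧ (lamM k).im = (k:ℝ) := by
  have heq : lamM k = (((-(k:ℝ)^2 - Real.sqrt ((k:ℝ)^4 - 4*(k:ℝ)^2))/2 : ℝ) : ℂ)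
      + ((k:ℝ) : ℂ) * Complex.I := by
    unfold lamM
    rw [disc_cast, cpow_half_nonneg h]
    push_cast
    ring
  rw [heq]
  constructor <;> simp <;> norm_cast

lemma lamP_small {k : ℤ} (h : (k:ℝ)^4 - 4*(k:ℝ)^2 ≤ 0) :
    (lamP k).re = -(k:ℝ)^2/2 ∧
      (lamP k).im = (2*(k:ℝ) + Real.sqrt (4*(k:ℝ)^2 - (k:ℝ)^4))/2 := by
  have heq : lamP k = ((-(k:ℝ)^2/2 : ℝ) : ℂ)
      + (((2*(k:ℝ) + Real.sqrt (4*(k:ℝ)^2 - (k:ℝ)^4))/2 : ℝ) : ℂ) * Complex.I := by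
    unfold lamP
    rw [disc_cast, cpow_half_neg h,
      show -((k:ℝ)^4 - 4*(k:ℝ)^2) = 4*(k:ℝ)^2 - (k:ℝ)^4 by ring]
    push_cast
    ring
  rw [heq]
  constructor <;> simp <;> norm_cast

lemma lamM_small {k : ℤ} (h : (k:ℝ)^4 - 4*(k:ℝ)^2 ≤ 0) :
    (lamM k).re = -(k:ℝ)^2/2 ∧
      (lamM k).im = (2*(k:ℝ) - Real.sqrt (4*(k:ℝ)^2 - (k:ℝ)^4))/2 := by
  have heq : lamM k = ((-(k:ℝ)^2/2 : ℝ) : ℂ)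
      + (((2*(k:ℝ) - Real.sqrt (4*(k:ℝ)^2 - (k:ℝ)^4))/2 : ℝ) : ℂ) * Complex.I := by
    unfold lamM
    rw [disc_cast, cpow_half_neg h,
      show -((k:ℝ)^4 - 4*(k:ℝ)^2) = 4*(k:ℝ)^2 - (k:ℝ)^4 by ring]
    push_cast
    ring
  rw [heq]
  constructor <;> simp <;> norm_cast

lemma irr3 : Irrational (Real.sqrt 3) := by
  have := Nat.Prime.irrational_sqrt (p := 3) (by norm_num)
  simpa using this

lemma sqrt3_sq : Real.sqrt 3 ^ 2 = 3 := Real.sq_sqrt (by norm_num)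

lemma sqrt3_pos : 0 < Real.sqrt 3 := Real.sqrt_pos.mpr (by norm_num)

lemma sqrt3_ne_int (n : ℤ) : Real.sqrt 3 ≠ (n : ℝ) := irr3.ne_int n

/-- **The hyperbolic and parabolic branches of the spectrum do not intersect away from the
double eigenvalues:** `λ_k⁺ ≠ λ_l⁻` for all `k, l ∉ {0, ±2}`; moreover
`λ_0⁺ = λ_0⁻ = 0`, `λ_2⁺ = λ_2⁻ = -2 + 2i` and `λ_{-2}⁺ = λ_{-2}⁻ = -2 - 2i`. -/
theorem spectral_branches_disjoint :
    (∀ k l : ℤ, k ≠ 0 → k ≠ 2 → k ≠ -2 → l ≠ 0 → l ≠ 2 → l ≠ -2 →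
      lamP k ≠ lamM l) ∧
    lamP 0 = 0 ∧ lamM 0 = 0 ∧
    lamP 2 = -2 + 2 * Complex.I ∧ lamM 2 = -2 + 2 * Complex.I ∧
    lamP (-2) = -2 - 2 * Complex.I ∧ lamM (-2) = -2 - 2 * Complex.I := by
  have hzero : ((0:ℂ)) ^ ((1:ℂ)/2) = 0 := by
    rw [Complex.zero_cpow (by norm_num : (1:ℂ)/2 ≠ 0)]
  refine ⟨?_, ?_, ?_, ?_, ?_, ?_, ?_⟩
  · intro k l hk0 hk2 hk2' hl0 hl2 hl2' heq
    -- classify k and l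
    have hkcase : k = 1 ∨ k = -1 ∨ k ≤ -3 ∨ 3 ≤ k := by omega
    have hlcase : l = 1 ∨ l = -1 ∨ l ≤ -3 ∨ 3 ≤ l := by omega
    have hbigk : (k ≤ -3 ∨ 3 ≤ k) → 0 < (k:ℝ)^4 - 4*(k:ℝ)^2 := by
      intro h
      have h9 : (9:ℤ) ≤ k^2 := by rcases h with h | h <;> nlinarith
      have h9' : (9:ℝ) ≤ (k:ℝ)^2 := by exact_mod_cast h9
      nlinarith
    have hbigl : (l ≤ -3 ∨ 3 ≤ l) → 0 < (l:ℝ)^4 - 4*(l:ℝ)^2 := by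
      intro h
      have h9 : (9:ℤ) ≤ l^2 := by rcases h with h | h <;> nlinarith
      have h9' : (9:ℝ) ≤ (l:ℝ)^2 := by exact_mod_cast h9
      nlinarith
    have hre := congrArg Complex.re heq
    have him := congrArg Complex.im heq
    have hsmall1 : ((1:ℤ):ℝ)^4 - 4*((1:ℤ):ℝ)^2 ≤ 0 := by norm_num
    have hsmallm1 : ((-1:ℤ):ℝ)^4 - 4*((-1:ℤ):ℝ)^2 ≤ 0 := by norm_num
    have hd1 : (4*((1:ℤ):ℝ)^2 - ((1:ℤ):ℝ)^4) = 3 := by norm_num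
    have hdm1 : (4*((-1:ℤ):ℝ)^2 - ((-1:ℤ):ℝ)^4) = 3 := by norm_num
    rcases hkcase with rfl | rfl | hk
    · -- k = 1
      have hP := lamP_small hsmall1
      rw [hd1] at hP
      rcases hlcase with rfl | rfl | hl
      · have hM := lamM_small hsmall1
        rw [hd1] at hM
        rw [hP.2, hM.2] at him
        have := sqrt3_pos
        norm_num at him
        linarith
      · have hM := lamM_small hsmallm1
        rw [hdm1] at hM
        rw [hP.2, hM.2] at him
        have := sqrt3_pos
        norm_num at him
        linarith
      · have hM := lamM_big (hbigl hl).le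
        rw [hP.2, hM.2] at him
        refine sqrt3_ne_int (2*l - 2) ?_
        push_cast
        push_cast at him
        linarith
    · -- k = -1
      have hP := lamP_small hsmallm1
      rw [hdm1] at hP
      rcases hlcase with rfl | rfl | hl
      · have hM := lamM_small hsmall1
        rw [hd1] at hM
        rw [hP.2, hM.2] at him
        have h1 := sqrt3_sq
        have h2 := sqrt3_pos
        norm_num at him
        nlinarith
      · have hM := lamM_small hsmallm1
        rw [hdm1] at hM
        rw [hP.2, hM.2] at him
        have := sqrt3_pos
        norm_num at him
        linarith
      · have hM := lamM_big (hbigl hl).le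
        rw [hP.2, hM.2] at him
        refine sqrt3_ne_int (2*l + 2) ?_
        push_cast
        push_cast at him
        linarith
    · -- 2 < |k|
      have hP := lamP_big (hbigk hk).le
      rcases hlcase with rfl | rfl | hl
      · have hM := lamM_small hsmall1
        rw [hd1] at hM
        rw [hP.2, hM.2] at him
        refine sqrt3_ne_int (2 - 2*k) ?_
        push_cast
        push_cast at him
        linarith
      · have hM := lamM_small hsmallm1
        rw [hdm1] at hM
        rw [hP.2, hM.2] at him
        refine sqrt3_ne_int (-2 - 2*k) ?_
        push_cast
        push_cast at him
        linarith
      · have hM := lamM_big (hbigl hl).le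
        rw [hP.2, hM.2] at him
        have hkl : k = l := by exact_mod_cast him
        subst hkl
        rw [hP.1, hM.1] at hre
        have hs : 0 < Real.sqrt ((k:ℝ)^4 - 4*(k:ℝ)^2) := Real.sqrt_pos.mpr (hbigk hk)
        linarith
  · unfold lamP
    norm_num [hzero]
  · unfold lamM
    norm_num [hzero]
  · unfold lamP
    rw [show ((2:ℤ):ℂ)^4 - 4*((2:ℤ):ℂ)^2 = 0 by push_cast; ring, hzero]
    push_cast; ring
  · unfold lamM
    rw [show ((2:ℤ):ℂ)^4 - 4*((2:ℤ):ℂ)^2 = 0 by push_cast; ring, hzero]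
    push_cast; ring
  · unfold lamP
    rw [show ((-2:ℤ):ℂ)^4 - 4*((-2:ℤ):ℂ)^2 = 0 by push_cast; ring, hzero]
    push_cast; ring
  · unfold lamM
    rw [show ((-2:ℤ):ℂ)^4 - 4*((-2:ℤ):ℂ)^2 = 0 by push_cast; ring, hzero]
    push_cast; ring
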